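/- arXiv:1508.07297 — 6 statements merged into one kernel-verified Lean document; each statement's English description precedes it below -/
import Mathlib

section
/- If A and B are analytic subsets of a Polish group G and both A and B are non-meager in G, then the product set A·B = {a*b : a ∈ A, b ∈ B} has non-empty interior in G. -/
/-!
Analytic sets have the Baire property. Write `s = range f` with `f : (ℕ → ℕ) → α` and let
`E l` be a Baire measurable envelope of the image of the cylinder coded by `l`. The envelope of a
set is the set itself together with the points near which it is non-meagre, so it lies in its
closure, and `E l \ ⋃ m, E (m :: l)` is meagre since the cylinder of `l` is the union of those of
the `m :: l`.
Off these countably many meagre sets, a point of `E []` can be followed along a branch `x` through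
all `E (res x n)`, so it lies in every `closure (f '' cylinder x n)`, hence equals `f x`.

For the product, let `A =ᵇ U` and `B =ᵇ V` with `U`, `V` open. If `g = u * v` with `u ∈ U`,
`v ∈ V`, the open set `{a ∈ U | a⁻¹ * g ∈ V}` contains `u`, so the set `{a ∈ A | a⁻¹ * g ∈ B}`,
residually equal to it, is non-meagre and in particular non-empty: `g ∈ A * B`. Thus the open set
`U * V`, non-empty because `A` and `B` are non-meagre, lies in `A * B`.
-/

open MeasureTheory Pointwise Set Filter Topology

section BaireEnvelope

variable {α : Type*} [TopologicalSpace α]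

theorem isMeagre_diff_of_residualEq {s t : Set α} (h : s =ᵇ t) : IsMeagre (s \ t) := by
  filter_upwards [eventuallyEq_set.1 h] with x hx hxst using hxst.2 (hx.1 hxst.1)

theorem isMeagre_congr {s t : Set α} (h : s =ᵇ t) : IsMeagre s ↔ IsMeagre t :=
  congr_sets (eventuallyEq_set.1 h.compl)

def meagreRegion (s : Set α) : Set α := ⋃₀ {u | IsOpen u ∧ IsMeagre (s ∩ u)}

theorem isOpen_meagreRegion (s : Set α) : IsOpen (meagreRegion s) :=
  isOpen_sUnion fun _ hu => hu.1

theorem isMeagre_inter_meagreRegion [SecondCountableTopology α] (s : Set α) :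
    IsMeagre (s ∩ meagreRegion s) := by
  obtain ⟨T, hTc, hTS, hT⟩ := TopologicalSpace.isOpen_sUnion_countable
    {u | IsOpen u ∧ IsMeagre (s ∩ u)} fun _ hu => hu.1
  rw [meagreRegion, ← hT, sUnion_eq_biUnion, inter_iUnion₂]
  exact isMeagre_biUnion hTc fun u hu => (hTS hu).2

def baireEnvelope (s : Set α) : Set α := s ∪ (meagreRegion s)ᶜ

theorem subset_baireEnvelope (s : Set α) : s ⊆ baireEnvelope s := subset_union_left

theorem baireEnvelope_subset_closure (s : Set α) : baireEnvelope s ⊆ closure s := by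
  refine union_subset subset_closure fun x hx => ?_
  by_contra hxs
  refine hx ⟨(closure s)ᶜ, ⟨isClosed_closure.isOpen_compl, ?_⟩, hxs⟩
  exact IsMeagre.empty.mono fun y hy => hy.2 (subset_closure hy.1)

theorem baireMeasurableSet_baireEnvelope [SecondCountableTopology α] (s : Set α) :
    BaireMeasurableSet (baireEnvelope s) := by
  have : baireEnvelope s = (s ∩ meagreRegion s) ∪ (meagreRegion s)ᶜ := by
    ext x
    simp only [baireEnvelope, mem_union, mem_inter_iff, mem_compl_iff]
    tauto
  rw [this]
  exact (isMeagre_inter_meagreRegion s).baireMeasurableSet.union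
    (isOpen_meagreRegion s).baireMeasurableSet.compl

theorem isMeagre_baireEnvelope_diff {s t : Set α} (ht : BaireMeasurableSet t) (hst : s ⊆ t) :
    IsMeagre (baireEnvelope s \ t) := by
  obtain ⟨u, hu, htu⟩ := ht.compl.residualEq_isOpen
  have hsu : IsMeagre (s ∩ u) := (isMeagre_diff_of_residualEq htu.symm).mono
    fun x (hx : x ∈ s ∩ u) => show x ∈ u \ tᶜ from ⟨hx.2, not_not.2 (hst hx.1)⟩
  have hu_sub : u ⊆ meagreRegion s := subset_sUnion_of_mem ⟨hu, hsu⟩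
  refine (isMeagre_diff_of_residualEq htu).mono fun x hx => ?_
  rcases hx with ⟨hxs | hxm, hxt⟩
  · exact absurd (hst hxs) hxt
  · exact ⟨hxt, fun hxu => hxm (hu_sub hxu)⟩

end BaireEnvelope

namespace PiNat

variable {α : Type*}

/-- `res x n` lists `x (n - 1), …, x 0`, so refining a cylinder conses onto its list. -/
def resCylinder (l : List α) : Set (ℕ → α) := {x | res x l.length = l}

theorem resCylinder_nil : resCylinder ([] : List α) = univ := by
  simp [resCylinder]

theorem resCylinder_eq_iUnion_cons (l : List α) :
    resCylinder l = ⋃ a, resCylinder (a :: l) := by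
  ext x
  simp [resCylinder]

theorem resCylinder_res (x : ℕ → α) (n : ℕ) : resCylinder (res x n) = cylinder x n := by
  simp [resCylinder, cylinder_eq_res]

theorem exists_forall_res {P : List α → Prop} (h0 : P [])
    (h : ∀ l, P l → ∃ a, P (a :: l)) : ∃ x : ℕ → α, ∀ n, P (res x n) := by
  choose g hg using h
  let L : ℕ → {l // P l} := fun n => Nat.rec ⟨[], h0⟩ (fun _ l => ⟨g l.1 l.2 :: l.1, hg _ _⟩) n
  refine ⟨fun n => g (L n).1 (L n).2, fun n => ?_⟩
  suffices res (fun n => g (L n).1 (L n).2) n = (L n).1 from this ▸ (L n).2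
  induction n with
  | zero => rfl
  | succ n ih => rw [res_succ, ih]

theorem eq_of_forall_mem_closure_image_cylinder [TopologicalSpace α] [DiscreteTopology α]
    {β : Type*} [TopologicalSpace β] [T2Space β] {f : (ℕ → α) → β} (hf : Continuous f)
    {x : ℕ → α} {y : β} (hy : ∀ n, y ∈ closure (f '' cylinder x n)) : y = f x := by
  have hbasis := ((isTopologicalBasis_cylinders fun _ : ℕ => α).nhds_hasBasis (a := x)).map f
  have hclust : ClusterPt y ((𝓝 x).map f) := by
    refine hbasis.clusterPt_iff_forall_mem_closure.2 ?_
    rintro _ ⟨⟨z, n, rfl⟩, hxz⟩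
    rw [← mem_cylinder_iff_eq.1 hxz]
    exact hy n
  exact eq_of_nhds_neBot (hclust.mono hf.continuousAt)

end PiNat

open PiNat in
theorem MeasureTheory.AnalyticSet.baireMeasurableSet {α : Type*} [TopologicalSpace α]
    [SecondCountableTopology α] [T2Space α] {s : Set α} (hs : AnalyticSet s) :
    BaireMeasurableSet s := by
  rw [AnalyticSet] at hs
  obtain rfl | ⟨f, hf, rfl⟩ := hs
  · exact IsMeagre.empty.baireMeasurableSet
  set E : List ℕ → Set α := fun l => baireEnvelope (f '' resCylinder l)
  have hE : ∀ l, BaireMeasurableSet (E l) := fun l => baireMeasurableSet_baireEnvelope _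
  have hsplit : ∀ l, IsMeagre (E l \ ⋃ m, E (m :: l)) := fun l =>
    isMeagre_baireEnvelope_diff (.iUnion fun m => hE _) <| by
      rw [resCylinder_eq_iUnion_cons l, image_iUnion]
      exact iUnion_mono fun m => subset_baireEnvelope _
  have hbranch : E [] \ range f ⊆ ⋃ l, (E l \ ⋃ m, E (m :: l)) := by
    rintro y ⟨hy, hyf⟩
    by_contra hy'
    simp only [mem_iUnion, Set.mem_sdiff, not_exists, not_and, not_forall, not_not] at hy'
    obtain ⟨x, hx⟩ := exists_forall_res (P := fun l => y ∈ E l) hy hy'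
    refine hyf ⟨x, (eq_of_forall_mem_closure_image_cylinder hf fun n => ?_).symm⟩
    rw [← resCylinder_res]
    exact baireEnvelope_subset_closure _ (hx n)
  have hsub : range f ⊆ E [] := by
    rw [← image_univ, ← resCylinder_nil]
    exact subset_baireEnvelope _
  rw [← sdiff_sdiff_cancel_left hsub]
  exact (hE []).diff ((isMeagre_iUnion hsplit).mono hbranch).baireMeasurableSet

theorem mul_subset_mul_of_residualEq {G : Type*} [Group G] [TopologicalSpace G]
    [IsTopologicalGroup G] [BaireSpace G] {A B U V : Set G} (hU : IsOpen U) (hV : IsOpen V)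
    (hAU : A =ᵇ U) (hBV : B =ᵇ V) : U * V ⊆ A * B := by
  rintro _ ⟨u, hu, v, hv, rfl⟩
  let φ : G ≃ₜ G := (Homeomorph.inv G).trans (Homeomorph.mulRight (u * v))
  have hφ : φ ⁻¹' B =ᵇ φ ⁻¹' V :=
    hBV.comp_tendsto (tendsto_residual_of_isOpenMap φ.continuous φ.isOpenMap)
  have hW : ¬IsMeagre (U ∩ φ ⁻¹' V) := by
    refine not_isMeagre_of_isOpen (hU.inter (hV.preimage φ.continuous)) ⟨u, hu, ?_⟩
    simpa [φ] using hv
  obtain ⟨a, ha, hab⟩ := nonempty_of_not_isMeagre <| (isMeagre_congr (hAU.inter hφ)).not.2 hW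
  exact ⟨a, ha, a⁻¹ * (u * v), hab, mul_inv_cancel_left a _⟩

/-- Piccard–Pettis: if `A` and `B` are analytic non-meager subsets of a Polish group `G`,
then `A * B` has non-empty interior. -/
theorem piccard_pettis_mul {G : Type*} [Group G] [TopologicalSpace G] [IsTopologicalGroup G]
    [PolishSpace G] {A B : Set G} (hA : AnalyticSet A) (hB : AnalyticSet B)
    (hAnm : ¬ IsMeagre A) (hBnm : ¬ IsMeagre B) :
    (interior (A * B)).Nonempty := by
  obtain ⟨U, hU, hAU⟩ := hA.baireMeasurableSet.residualEq_isOpen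
  obtain ⟨V, hV, hBV⟩ := hB.baireMeasurableSet.residualEq_isOpen
  have hUne : U.Nonempty := nonempty_of_not_isMeagre ((isMeagre_congr hAU).not.1 hAnm)
  have hVne : V.Nonempty := nonempty_of_not_isMeagre ((isMeagre_congr hBV).not.1 hBnm)
  exact (hUne.mul hVne).mono <|
    interior_maximal (mul_subset_mul_of_residualEq hU hV hAU hBV) hV.mul_left
end

section
/- Let G be a topological group with Raikov completion Ḡ, and let D be an n-dense subset of G. If A ⊆ G is closed and the set D·cl_Ḡ(A) has empty interior in Ḡ, then A is a Z_n-set in G. -/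
open Pointwise Topology
/-- A set `B ⊆ X` is `n`-dense if the continuous maps `[0,1]ⁿ → X` with range in `B`
are dense in `C([0,1]ⁿ, X)` with the compact-open topology. -/
def IsNDense {X : Type*} [TopologicalSpace X] (n : ℕ) (B : Set X) : Prop :=
  Dense {f : C(Fin n → unitInterval, X) | Set.range f ⊆ B}

/-- A set `A ⊆ X` is a `Z_n`-set if it is closed and its complement is `n`-dense. -/
def IsZSet {X : Type*} [TopologicalSpace X] (n : ℕ) (A : Set X) : Prop :=
  IsClosed A ∧ IsNDense n Aᶜ

/-!
For a compact `K ⊆ D`, the closed set `e(K) · cl(e(A))` lies in `e(D) · cl(e(A))`, so it has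
empty interior, and since `e` is a dense embedding so does `K · A` in `G`. As inversion is a
homeomorphism of `C([0,1]ⁿ, G)`, `D⁻¹` is `n`-dense too; approximate `f` by a map `g` into `D⁻¹`
and put `K = (range g)⁻¹ ⊆ D`. Choosing `c` near `1` outside `K · A`, the map `g · c` is near `f`
and misses `A`, since `g(x) c ∈ A` would give `c ∈ g(x)⁻¹ A ⊆ K · A`.
-/

open Set

theorem IsDenseInducing.image_interior_subset_interior_closure_image {X Y : Type*}
    [TopologicalSpace X] [TopologicalSpace Y] {e : X → Y} (he : IsDenseInducing e) (s : Set X) :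
    e '' interior s ⊆ interior (closure (e '' s)) := by
  rintro _ ⟨x, hx, rfl⟩
  exact mem_interior_iff_mem_nhds.mpr (he.closure_image_mem_nhds (mem_interior_iff_mem_nhds.mp hx))

theorem interior_mul_eq_empty_of_isDenseInducing {G H : Type*} [Group G] [TopologicalSpace G]
    [Group H] [TopologicalSpace H] [IsTopologicalGroup H] {e : G →* H} (he : IsDenseInducing e)
    {K A : Set G} (hK : IsCompact K) (hKA : interior (e '' K * closure (e '' A)) = ∅) :
    interior (K * A) = ∅ := by
  have hclosure : closure (e '' (K * A)) ⊆ e '' K * closure (e '' A) := by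
    rw [image_mul]
    exact closure_minimal (mul_subset_mul_left subset_closure)
      (isClosed_closure.mul_left_of_isCompact (hK.image he.continuous))
  rw [← image_eq_empty (f := e), ← subset_empty_iff, ← hKA]
  exact (he.image_interior_subset_interior_closure_image (K * A)).trans (interior_mono hclosure)

section IsTopologicalGroup

variable {G : Type*} [Group G] [TopologicalSpace G] [IsTopologicalGroup G]

theorem ContinuousMap.mem_closure_setOf_range_subset_compl {X : Type*} [TopologicalSpace X]
    [CompactSpace X] [LocallyCompactSpace X] {A : Set G} (g : C(X, G))
    (hg : interior ((range g)⁻¹ * A) = ∅) :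
    g ∈ closure {f : C(X, G) | range f ⊆ Aᶜ} := by
  rw [mem_closure_iff_nhds]
  intro N hN
  have hshift : Filter.Tendsto (fun c : G => g * const X c) (𝓝 1) (𝓝 g) := by
    have hcont : Continuous fun c : G => g * const X c := continuous_const.mul continuous_const'
    simpa using hcont.tendsto 1
  obtain ⟨c, hcN, hcA⟩ : ∃ c ∈ (fun c : G => g * const X c) ⁻¹' N, c ∉ (range g)⁻¹ * A := by
    by_contra! h
    have : (1 : G) ∈ interior ((range g)⁻¹ * A) :=
      mem_interior_iff_mem_nhds.mpr (Filter.mem_of_superset (hshift hN) h)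
    simp [hg] at this
  refine ⟨g * const X c, hcN, ?_⟩
  rintro _ ⟨x, rfl⟩ hxA
  exact hcA ⟨(g x)⁻¹, inv_mem_inv.mpr (mem_range_self x), g x * c, hxA, by group⟩

theorem IsNDense.inv {n : ℕ} {D : Set G} (hD : IsNDense n D) : IsNDense n D⁻¹ := by
  have hinv : Continuous (Inv.inv : C(Fin n → unitInterval, G) → _) :=
    ContinuousMap.continuous_postcomp ⟨Inv.inv, continuous_inv⟩
  unfold IsNDense
  convert inv_surjective.denseRange.dense_image hinv hD using 1
  ext f
  simp [range_subset_iff]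

end IsTopologicalGroup

theorem isZSet_of_empty_interior_mul_closure_general {G GBar : Type*}
    [Group G] [TopologicalSpace G] [IsTopologicalGroup G]
    [Group GBar] [UniformSpace GBar] [IsUniformGroup GBar]
    (e : G →* GBar) (he : IsEmbedding e) (hdense : DenseRange e)
    {D A : Set G} (n : ℕ) (hD : IsNDense n D) (hA : IsClosed A)
    (hint : interior ((e '' D) * closure (e '' A)) = ∅) :
    IsZSet n A := by
  have hmul : ∀ K ⊆ D, IsCompact K → interior (K * A) = ∅ := fun K hKD hK =>
    interior_mul_eq_empty_of_isDenseInducing ⟨he.isInducing, hdense⟩ hK <| subset_empty_iff.mp <|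
      hint ▸ interior_mono (mul_subset_mul_right (image_mono hKD))
  refine ⟨hA, dense_closure.mp (hD.inv.mono fun g hg => ?_)⟩
  exact g.mem_closure_setOf_range_subset_compl <|
    hmul _ (inv_subset.mpr hg) (isCompact_range g.continuous).inv

/-- If `D` is `n`-dense in a topological group `G`, `A ⊆ G` is closed and the set
`D · cl(A)` has empty interior in the Raikov completion `Ḡ` of `G`
(modelled as a complete topological group containing `G` as a dense subgroup via an
embedding `e`), then `A` is a `Z_n`-set in `G`. -/
theorem isZSet_of_empty_interior_mul_closure {G GBar : Type*}
    [Group G] [TopologicalSpace G] [IsTopologicalGroup G]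
    [Group GBar] [UniformSpace GBar] [IsUniformGroup GBar] [CompleteSpace GBar]
    (e : G →* GBar) (he : IsEmbedding e) (hdense : DenseRange e)
    {D A : Set G} (n : ℕ) (hD : IsNDense n D) (hA : IsClosed A)
    (hint : interior ((e '' D) * closure (e '' A)) = ∅) :
    IsZSet n A :=
  isZSet_of_empty_interior_mul_closure_general e he hdense n hD hA hint
end

section
/- Let G be a separable metrizable topological group and A ⊆ G closed. If there exists a σ-compact dense subset D ⊆ G such that for every compact K ⊆ D the set K·A is nowhere dense in G, then the closure of A in the Raikov completion Ḡ, multiplied by D, has empty interior in Ḡ. -/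
/-! The Raikov completion `Ḡ` of a first countable group is first countable at `1`, hence
completely metrizable and a Baire space. Writing `D = ⋃ₙ Kₙ` with `Kₙ` compact, each
`Kₙ · cl(A)` lies in the closure of the image of `Kₙ · A`, which is nowhere dense in `Ḡ`
because `Kₙ · A` is nowhere dense in the dense subgroup `G`. So `D · cl(A)` is meagre, and
meagre sets have empty interior in a Baire space. -/

open Pointwise Topology Filter Set

namespace Topology.IsDenseInducing

variable {α β : Type*} [TopologicalSpace α] [TopologicalSpace β] {i : α → β}

theorem isNowhereDense_image (di : IsDenseInducing i) {s : Set α} (hs : IsNowhereDense s) :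
    IsNowhereDense (i '' s) := by
  rw [IsNowhereDense, ← not_nonempty_iff_eq_empty]
  intro hne
  obtain ⟨_, hx, x, rfl⟩ := di.dense.inter_open_nonempty _ isOpen_interior hne
  have hx' : x ∈ interior (closure s) := by
    rw [di.isInducing.closure_eq_preimage_closure_image]
    exact preimage_interior_subset_interior_preimage di.continuous hx
  rwa [hs] at hx'

/-- The closures of the images of a countable basis at `a` form a basis at `i a`. -/
theorem isCountablyGenerated_nhds [RegularSpace β] (di : IsDenseInducing i) (a : α)
    [(𝓝 a).IsCountablyGenerated] : (𝓝 (i a)).IsCountablyGenerated := by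
  obtain ⟨V, hV⟩ := (𝓝 a).exists_antitone_basis
  have hbasis : (𝓝 (i a)).HasBasis (fun _ : ℕ => True) (fun n => closure (i '' V n)) := by
    refine ⟨fun W => ⟨fun hW => ?_, fun ⟨n, _, hn⟩ => ?_⟩⟩
    · obtain ⟨C, hC, hCclosed, hCW⟩ := exists_mem_nhds_isClosed_subset hW
      obtain ⟨n, hn⟩ := hV.mem_iff.1 (di.continuous.continuousAt hC)
      exact ⟨n, trivial, (closure_minimal (image_subset_iff.2 hn) hCclosed).trans hCW⟩
    · exact mem_of_superset (di.closure_image_mem_nhds (hV.mem n)) hn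
  exact hbasis.isCountablyGenerated

end Topology.IsDenseInducing

theorem IsMeagre.interior_eq_empty {X : Type*} [TopologicalSpace X] [BaireSpace X] {s : Set X}
    (hs : IsMeagre s) : interior s = ∅ :=
  not_nonempty_iff_eq_empty.1 fun hne =>
    not_isMeagre_of_isOpen isOpen_interior hne (hs.mono interior_subset)

theorem baireSpace_of_isDenseInducing {G H : Type*} [Group G] [TopologicalSpace G]
    [FirstCountableTopology G] [Group H] [UniformSpace H] [IsUniformGroup H] [CompleteSpace H]
    (e : G →* H) (di : IsDenseInducing e) : BaireSpace H := by
  have : (𝓝 (1 : H)).IsCountablyGenerated := map_one e ▸ di.isCountablyGenerated_nhds 1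
  have := IsUniformGroup.uniformity_countably_generated (α := H)
  infer_instance

theorem mul_closure_subset_closure_mul {M : Type*} [Monoid M] [TopologicalSpace M]
    [ContinuousMul M] (s t : Set M) : s * closure t ⊆ closure (s * t) :=
  set_smul_closure_subset s t

theorem empty_interior_mul_closure_of_nowhereDense_general {G GBar : Type*}
    [Group G] [TopologicalSpace G]
    [TopologicalSpace.MetrizableSpace G]
    [Group GBar] [UniformSpace GBar] [IsUniformGroup GBar] [CompleteSpace GBar]
    (e : G →* GBar) (he : IsEmbedding e) (hdense : DenseRange e)
    {D A : Set G} (hDsc : IsSigmaCompact D)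
    (hKA : ∀ K ⊆ D, IsCompact K → IsNowhereDense (K * A)) :
    interior ((e '' D) * closure (e '' A)) = ∅ := by
  have di : IsDenseInducing e := ⟨he.isInducing, hdense⟩
  have := baireSpace_of_isDenseInducing e di
  obtain ⟨K, hKc, rfl⟩ := hDsc
  have hmeagre : ∀ n, IsMeagre (closure (e '' (K n * A))) := fun n =>
    (di.isNowhereDense_image (hKA (K n) (subset_iUnion K n) (hKc n))).closure.isMeagre
  refine IsMeagre.interior_eq_empty ((isMeagre_iUnion hmeagre).mono ?_)
  rw [image_iUnion, iUnion_mul]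
  refine iUnion_mono fun n => ?_
  rw [image_mul]
  exact mul_closure_subset_closure_mul _ _

/-- If `G` is a separable metrizable topological group, `A ⊆ G` is closed and `D ⊆ G` is a
σ-compact dense set such that `K · A` is nowhere dense in `G` for every compact `K ⊆ D`,
then `D · cl(A)` has empty interior in the Raikov completion `Ḡ` of `G`
(modelled as a complete topological group containing `G` as a dense subgroup via an
embedding `e`). -/
theorem empty_interior_mul_closure_of_nowhereDense {G GBar : Type*}
    [Group G] [TopologicalSpace G] [IsTopologicalGroup G]
    [TopologicalSpace.SeparableSpace G] [TopologicalSpace.MetrizableSpace G]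
    [Group GBar] [UniformSpace GBar] [IsUniformGroup GBar] [CompleteSpace GBar]
    (e : G →* GBar) (he : IsEmbedding e) (hdense : DenseRange e)
    {D A : Set G} (hA : IsClosed A) (hDsc : IsSigmaCompact D) (hDd : Dense D)
    (hKA : ∀ K ⊆ D, IsCompact K → IsNowhereDense (K * A)) :
    interior ((e '' D) * closure (e '' A)) = ∅ :=
  empty_interior_mul_closure_of_nowhereDense_general e he hdense hDsc hKA
end

section
/- Let C be a convex subset of a separable topological vector space X over ℝ with metrizable topology. If there exists a countable set S ⊆ X such that S + C is 1-dense in X (i.e., the set of paths [0,1] → S + C is dense in C([0,1], X)), then the closure of the linear span of C − C is all of X. -/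
open Pointwise Topology
/-!
Let `V` be the closure of the span of `C - C`. In the quotient `X ⧸ V`, a Hausdorff topological
group and hence a Tychonoff space, `C` collapses to a single point, so `S + C` maps onto a countable
set. A path with values in `S + C` therefore projects to a countable connected set, which must be a
point: the endpoints of such a path differ by an element of `V`. This is a closed condition on
paths, so by `1`-density it holds for every path, and the path `t ↦ t • x` gives `x ∈ V`.
-/

open Set

@[to_additive]
theorem IsTopologicalGroup.completelyRegularSpace (G : Type*) [TopologicalSpace G] [Group G]
    [IsTopologicalGroup G] : CompletelyRegularSpace G :=
  .of_exists_uniformSpace ⟨IsTopologicalGroup.rightUniformSpace G, rfl⟩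

theorem Set.Countable.subsingleton_of_isPreconnected {X : Type*} [TopologicalSpace X] [T35Space X]
    {s : Set X} (hs : s.Countable) (hs' : IsPreconnected s) : s.Subsingleton :=
  totallyDisconnectedSpace_subtype_iff.mp hs.totallySeparatedSpace.totallyDisconnectedSpace
    s Subset.rfl hs'

theorem AddSubgroup.sub_mem_of_range_subset_add {X Y : Type*} [AddCommGroup X] [TopologicalSpace X]
    [IsTopologicalAddGroup X] [TopologicalSpace Y] [PreconnectedSpace Y] {H : AddSubgroup X}
    (hH : IsClosed (H : Set X)) {S C : Set X} (hS : S.Countable) (hC : C - C ⊆ H) {g : Y → X}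
    (hg : Continuous g) (hgSC : range g ⊆ S + C) (y y' : Y) : g y - g y' ∈ H := by
  have : IsClosed (H : Set X) := hH
  have : T35Space (X ⧸ H) := { IsTopologicalAddGroup.completelyRegularSpace (X ⧸ H) with }
  let π := QuotientAddGroup.mk' H
  have hπC : (π '' C).Subsingleton := by
    rintro _ ⟨c, hc, rfl⟩ _ ⟨c', hc', rfl⟩
    exact QuotientAddGroup.eq_iff_sub_mem.mpr (hC (sub_mem_sub hc hc'))
  have hcount : (range (π ∘ g)).Countable :=
    ((hS.image π).image2 hπC.countable (· + ·)).mono <| by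
      rw [range_comp, image2_add, ← image_add]
      exact image_mono hgSC
  have hconn : IsPreconnected (range (π ∘ g)) :=
    isPreconnected_range (QuotientAddGroup.continuous_mk.comp hg)
  exact QuotientAddGroup.eq_iff_sub_mem.mp
    (hcount.subsingleton_of_isPreconnected hconn (mem_range_self y) (mem_range_self y'))

theorem closure_span_sub_eq_univ_general {X : Type*} [AddCommGroup X] [Module ℝ X]
    [TopologicalSpace X] [IsTopologicalAddGroup X] [ContinuousSMul ℝ X]
    {C : Set X} {S : Set X} (hS : S.Countable)
    (h1 : IsNDense 1 (S + C)) :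
    closure (Submodule.span ℝ (C - C) : Set X) = Set.univ := by
  let V := (Submodule.span ℝ (C - C)).topologicalClosure
  have hV : IsClosed (V : Set X) := (Submodule.span ℝ (C - C)).isClosed_topologicalClosure
  have hCC : C - C ⊆ V := Submodule.subset_span.trans (Submodule.le_topologicalClosure _)
  have hpaths : ∀ f : C(Fin 1 → unitInterval, X), f 1 - f 0 ∈ V := by
    have hclosed : IsClosed {f : C(Fin 1 → unitInterval, X) | f 1 - f 0 ∈ V} :=
      hV.preimage ((continuous_eval_const _).sub (continuous_eval_const _))
    refine fun f => closure_minimal (fun g hg => ?_) hclosed (h1.closure_eq ▸ mem_univ f)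
    exact V.toAddSubgroup.sub_mem_of_range_subset_add hV hS hCC g.continuous hg 1 0
  refine eq_univ_of_forall fun x => ?_
  have hx := hpaths ⟨fun t => (t 0 : ℝ) • x, by fun_prop⟩
  simp only [ContinuousMap.coe_mk, Pi.one_apply, Pi.zero_apply, Icc.coe_one, Icc.coe_zero,
    one_smul, zero_smul, sub_zero] at hx
  exact hx

/-- If `C` is a convex subset of a separable metrizable real topological vector space `X`
and `S + C` is `1`-dense in `X` for some countable `S`, then the closed linear span of
`C - C` is all of `X`. -/
theorem closure_span_sub_eq_univ {X : Type*} [AddCommGroup X] [Module ℝ X]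
    [TopologicalSpace X] [IsTopologicalAddGroup X] [ContinuousSMul ℝ X]
    [TopologicalSpace.SeparableSpace X] [TopologicalSpace.MetrizableSpace X]
    {C : Set X} (hC : Convex ℝ C) {S : Set X} (hS : S.Countable)
    (h1 : IsNDense 1 (S + C)) :
    closure (Submodule.span ℝ (C - C) : Set X) = Set.univ :=
  closure_span_sub_eq_univ_general hS h1
end

section
/- Let A ⊆ B be convex sets in a metrizable topological vector space X over ℝ, with A dense in B. Then for every n, every continuous map f : [0,1]^n → B, and every neighborhood U of 0 in X, there exists a continuous map g : [0,1]^n → A such that g(z) ∈ f(z) + U for all z ∈ [0,1]^n. -/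
/-!
Products of tent functions on a grid of mesh `1/N` form a partition of unity of `[0,1]ⁿ` in which
every point meets at most `2ⁿ` members, each supported within `1/N` of its grid point. Moving `f` at
each grid point to a nearby point of `A` and gluing with this partition gives a map into `A`, by
convexity, and `g z - f z` is then a convex combination of at most `2ⁿ` vectors from a small
neighbourhood of `0`. Without local convexity only the bounded number of terms controls such a
combination: a sum of at most `m` vectors from a small enough balanced neighbourhood lies in `U`.
-/

open Filter Topology Finset
open scoped Uniformity

section SmallSums

theorem exists_nhds_zero_forall_sum_mem.{u} {M : Type*} [AddCommMonoid M] [TopologicalSpace M]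
    [ContinuousAdd M] (m : ℕ) {U : Set M} (hU : U ∈ 𝓝 0) :
    ∃ W ∈ 𝓝 (0 : M), ∀ {ι : Type u} (s : Finset ι) (x : ι → M),
      #s ≤ m → (∀ i ∈ s, x i ∈ W) → ∑ i ∈ s, x i ∈ U := by
  induction m generalizing U with
  | zero =>
    refine ⟨U, hU, fun s x hs _ => ?_⟩
    rw [card_eq_zero.mp (Nat.le_zero.mp hs), sum_empty]
    exact mem_of_mem_nhds hU
  | succ m ih =>
    obtain ⟨V, hV, hVU⟩ := exists_nhds_zero_half hU
    obtain ⟨W, hW, hWV⟩ := ih hV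
    refine ⟨W ∩ V, inter_mem hW hV, fun s x hs hx => ?_⟩
    classical
    rcases s.eq_empty_or_nonempty with rfl | ⟨i, hi⟩
    · simpa using mem_of_mem_nhds hU
    rw [← add_sum_erase s x hi]
    refine hVU _ (hx i hi).2 _ (hWV _ _ ?_ fun j hj => (hx j (mem_of_mem_erase hj)).1)
    rw [card_erase_of_mem hi]
    omega

variable {X : Type*} [AddCommGroup X] [TopologicalSpace X] [IsTopologicalAddGroup X]

theorem Continuous.exists_pos_forall_dist_lt_sub_mem {K : Type*} [PseudoMetricSpace K]
    [CompactSpace K] {f : K → X} (hf : Continuous f) {V : Set X} (hV : V ∈ 𝓝 0) :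
    ∃ δ > 0, ∀ x y, dist x y < δ → f y - f x ∈ V := by
  let := IsTopologicalAddGroup.rightUniformSpace X
  have := isUniformAddGroup_of_addCommGroup (G := X)
  have hVunif : {p : X × X | p.2 - p.1 ∈ V} ∈ 𝓤 X := by
    rw [uniformity_eq_comap_nhds_zero]
    exact preimage_mem_comap hV
  exact Metric.mem_uniformity_dist.mp (CompactSpace.uniformContinuous_of_continuous hf hVunif)

variable [Module ℝ X] [ContinuousSMul ℝ X]

theorem exists_nhds_zero_forall_sum_smul_sub_mem.{u} (m : ℕ) {U : Set X} (hU : U ∈ 𝓝 0) :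
    ∃ W ∈ 𝓝 (0 : X), ∀ {ι : Type u} [Fintype ι] (w : ι → ℝ) (a : ι → X) (y : X),
      (∀ i, 0 ≤ w i) → ∑ i, w i = 1 → #{i | w i ≠ 0} ≤ m → (∀ i, w i ≠ 0 → a i - y ∈ W) →
        ∑ i, w i • a i - y ∈ U := by
  obtain ⟨W, hW, hWU⟩ := exists_nhds_zero_forall_sum_mem.{u} m hU
  refine ⟨balancedCore ℝ W, balancedCore_mem_nhds_zero hW,
    fun w a y hw0 hw1 hcard hay => ?_⟩
  have hdiff : ∑ i, w i • a i - y = ∑ i with w i ≠ 0, w i • (a i - y) := by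
    rw [sum_filter_of_ne (p := (w · ≠ 0)) fun i _ h hw => h (by rw [hw, zero_smul])]
    simp only [smul_sub, sum_sub_distrib, ← sum_smul, hw1, one_smul]
  rw [hdiff]
  refine hWU _ _ hcard fun i hi => balancedCore_subset (𝕜 := ℝ) W ?_
  have hwi : ‖w i‖ ≤ 1 := by
    rw [Real.norm_of_nonneg (hw0 i), ← hw1]
    exact single_le_sum (fun j _ => hw0 j) (mem_univ i)
  exact (balancedCore_balanced W).smul_mem hwi (hay i (mem_filter.mp hi).2)

end SmallSums

def tent (x : ℝ) : ℝ := max 0 (1 - |x|)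

theorem tent_nonneg (x : ℝ) : 0 ≤ tent x := le_max_left _ _

theorem continuous_tent : Continuous tent := by
  unfold tent
  fun_prop

theorem abs_lt_one_of_tent_ne_zero {x : ℝ} (h : tent x ≠ 0) : |x| < 1 := by
  by_contra! hx
  exact h (max_eq_left (by linarith))

-- The tents at the integers are differences of shifted ramps, so their sums telescope.
theorem tent_eq_sub (x : ℝ) : tent x = max 0 (min 1 (x + 1)) - max 0 (min 1 x) := by
  simp only [tent, abs, max_def, min_def]
  split_ifs <;> linarith

theorem sum_tent_sub (N : ℕ) {c : ℝ} (h0 : 0 ≤ c) (hN : c ≤ N) :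
    ∑ j : Fin (N + 1), tent (c - j) = 1 := by
  let r : ℕ → ℝ := fun j => max 0 (min 1 (c - j + 1))
  have hterm : ∀ j : ℕ, tent (c - j) = r j - r (j + 1) := by
    intro j
    rw [tent_eq_sub]
    simp only [r]
    push_cast
    ring_nf
  rw [Fin.sum_univ_eq_sum_range (fun j => tent (c - j)), sum_congr rfl fun j _ => hterm j,
    sum_range_sub']
  simp only [r, Nat.cast_zero, Nat.cast_add_one, sub_zero]
  rw [min_eq_left (by linarith), max_eq_right zero_le_one, min_eq_right (by linarith),
    max_eq_left (by linarith), sub_zero]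

theorem card_tent_sub_ne_zero_le_two (N : ℕ) (c : ℝ) :
    #{j : Fin (N + 1) | tent (c - j) ≠ 0} ≤ 2 := by
  calc #{j : Fin (N + 1) | tent (c - j) ≠ 0}
      ≤ #(Icc ⌊c⌋₊ (⌊c⌋₊ + 1)) := by
        refine card_le_card_of_injOn Fin.val (fun j hj => ?_) Fin.val_injective.injOn
        have hj' := abs_lt.mp (abs_lt_one_of_tent_ne_zero (mem_filter.mp (mem_coe.mp hj)).2)
        have hlo : ⌊c⌋₊ < (j : ℕ) + 1 := (Nat.floor_lt' (Nat.succ_ne_zero _)).mpr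
          (by push_cast; linarith)
        have hhi : ((j : ℕ) : ℝ) < ⌊c⌋₊ + 2 := by linarith [Nat.lt_floor_add_one c]
        have hhi' : (j : ℕ) < ⌊c⌋₊ + 2 := by exact_mod_cast hhi
        simp only [coe_Icc, Set.mem_Icc]
        omega
    _ = 2 := by rw [Nat.card_Icc]; omega

noncomputable section Cube

open unitInterval

variable {n : ℕ}

def gridPoint (N : ℕ) (J : Fin n → Fin (N + 1)) : Fin n → I :=
  fun k => ⟨J k / N, div_nonneg (Nat.cast_nonneg _) (Nat.cast_nonneg _),
    div_le_one_of_le₀ (by exact_mod_cast Fin.is_le (J k)) (Nat.cast_nonneg _)⟩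

def cubeTent (N : ℕ) (J : Fin n → Fin (N + 1)) (z : Fin n → I) : ℝ :=
  ∏ k, tent (N * z k - J k)

theorem cubeTent_nonneg (N : ℕ) (J : Fin n → Fin (N + 1)) (z : Fin n → I) :
    0 ≤ cubeTent N J z :=
  prod_nonneg fun _ _ => tent_nonneg _

@[fun_prop]
theorem continuous_cubeTent (N : ℕ) (J : Fin n → Fin (N + 1)) : Continuous (cubeTent N J) :=
  continuous_finsetProd _ fun k _ => continuous_tent.comp (by fun_prop)

theorem sum_cubeTent (N : ℕ) (z : Fin n → I) : ∑ J, cubeTent N J z = 1 := by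
  simp only [cubeTent]
  rw [← Fintype.prod_sum fun k (j : Fin (N + 1)) => tent (N * z k - j)]
  refine prod_eq_one fun k _ => sum_tent_sub N ?_ ?_
  · exact mul_nonneg (Nat.cast_nonneg N) (z k).2.1
  · exact mul_le_of_le_one_right (Nat.cast_nonneg N) (z k).2.2

theorem card_cubeTent_ne_zero_le (N : ℕ) (z : Fin n → I) :
    #{J | cubeTent N J z ≠ 0} ≤ 2 ^ n := by
  calc #{J | cubeTent N J z ≠ 0}
      ≤ #(Fintype.piFinset fun k => {j : Fin (N + 1) | tent (N * z k - j) ≠ 0}) := by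
        refine card_le_card fun J hJ => Fintype.mem_piFinset.mpr fun k => ?_
        exact mem_filter.mpr ⟨mem_univ _, prod_ne_zero_iff.mp (mem_filter.mp hJ).2 k (mem_univ k)⟩
    _ = ∏ k, #{j : Fin (N + 1) | tent (N * z k - j) ≠ 0} := Fintype.card_piFinset _
    _ ≤ 2 ^ n := by
        simpa using prod_le_pow_card (univ : Finset (Fin n)) _ 2 fun k _ =>
          card_tent_sub_ne_zero_le_two N _

theorem dist_gridPoint_lt {N : ℕ} (hN : 0 < N) {J : Fin n → Fin (N + 1)} {z : Fin n → I}
    (h : cubeTent N J z ≠ 0) : dist z (gridPoint N J) < 1 / N := by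
  have hN' : (0 : ℝ) < N := Nat.cast_pos.mpr hN
  refine (dist_pi_lt_iff (one_div_pos.mpr hN')).mpr fun k => ?_
  have hk := abs_lt_one_of_tent_ne_zero (prod_ne_zero_iff.mp h k (mem_univ k))
  rw [Subtype.dist_eq, Real.dist_eq]
  calc |(z k : ℝ) - J k / N| = |((N : ℝ) * z k - J k) / N| := by congr 1; field_simp
    _ = |(N : ℝ) * z k - J k| / N := by rw [abs_div, abs_of_pos hN']
    _ < 1 / N := div_lt_div_of_pos_right hk hN'

end Cube

theorem dense_convex_subset_n_dense_general {X : Type*} [AddCommGroup X] [Module ℝ X]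
    [TopologicalSpace X] [IsTopologicalAddGroup X] [ContinuousSMul ℝ X]
    {A B : Set X} (hA : Convex ℝ A)
    (hdense : B ⊆ closure A) :
    ∀ (n : ℕ) (f : C(Fin n → unitInterval, X)), Set.range f ⊆ B →
      ∀ U ∈ nhds (0 : X), ∃ g : C(Fin n → unitInterval, X),
        Set.range g ⊆ A ∧ ∀ z, g z - f z ∈ U := by
  intro n f hfB U hU
  obtain ⟨W, hW, hWU⟩ := exists_nhds_zero_forall_sum_smul_sub_mem (2 ^ n) hU
  obtain ⟨V, hV, hVW⟩ := exists_nhds_zero_half hW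
  obtain ⟨δ, hδ, hfδ⟩ := f.continuous.exists_pos_forall_dist_lt_sub_mem hV
  obtain ⟨N, hN⟩ := exists_nat_one_div_lt hδ
  have hgrid : ∀ J, ∃ a ∈ A, a - f (gridPoint (N + 1) J) ∈ V := fun J =>
    mem_closure_iff_nhds_zero.mp (hdense (hfB (Set.mem_range_self _))) V hV
  choose a haA haV using hgrid
  refine ⟨⟨fun z => ∑ J, cubeTent (N + 1) J z • a J, by fun_prop⟩, ?_, fun z => ?_⟩
  · rintro _ ⟨z, rfl⟩
    exact hA.sum_mem (fun J _ => cubeTent_nonneg _ J z) (sum_cubeTent _ z) fun J _ => haA J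
  refine hWU _ a (f z) (fun J => cubeTent_nonneg _ J z) (sum_cubeTent _ z)
    (card_cubeTent_ne_zero_le _ z) fun J hJ => ?_
  have hclose : dist z (gridPoint (N + 1) J) < δ :=
    (dist_gridPoint_lt N.succ_pos hJ).trans (by rwa [Nat.cast_add_one])
  rw [← sub_add_sub_cancel (a J) (f (gridPoint (N + 1) J)) (f z)]
  exact hVW _ (haV J) _ (hfδ _ _ hclose)

/-- A dense convex subset `A` of a convex set `B` in a metrizable real topological vector
space is `n`-dense in `B` for every `n`: every continuous map `f : [0,1]ⁿ → B` can be
uniformly approximated by continuous maps into `A`. -/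
theorem dense_convex_subset_n_dense {X : Type*} [AddCommGroup X] [Module ℝ X]
    [TopologicalSpace X] [IsTopologicalAddGroup X] [ContinuousSMul ℝ X]
    [TopologicalSpace.MetrizableSpace X]
    {A B : Set X} (hAB : A ⊆ B) (hA : Convex ℝ A) (hB : Convex ℝ B)
    (hdense : B ⊆ closure A) :
    ∀ (n : ℕ) (f : C(Fin n → unitInterval, X)), Set.range f ⊆ B →
      ∀ U ∈ nhds (0 : X), ∃ g : C(Fin n → unitInterval, X),
        Set.range g ⊆ A ∧ ∀ z, g z - f z ∈ U :=
  dense_convex_subset_n_dense_general hA hdense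
end

section
/- Every nonempty Polish convex subset A of a metrizable topological vector space X over ℝ contains a translate c + K of a compact convex symmetric set K = −K such that the closure of the linear span ℝ·K contains A − A. -/
/-!
Take a dense sequence `aₙ` in `A` and put `bₙ = aₙ - a₀`. Choose scales `λₙ > 0` one after the
other, so small that every partial sum `a₀ + ∑_{i<n} tᵢ λᵢ bᵢ` with `tᵢ ∈ [0, 2]` is a convex
combination of points of `A`, and that, in a complete metric of `A`, consecutive partial sums are
`2⁻ⁿ`-close uniformly in `t`; the uniformity comes from compactness of the cube `[0, 2]^ℕ`. The
series then converge in `A`, continuously in `t`. Hence `K = {∑ sₙ λₙ bₙ : s ∈ [-1, 1]^ℕ}` is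
compact, convex and symmetric, `c + K ⊆ A` for `c = a₀ + ∑ λₙ bₙ`, and `K` contains every
`λₙ bₙ`, so the span of `K` contains all `aₘ - aₙ`, which are dense in `A - A`.
-/

open Set Filter Topology Function Pointwise

theorem exists_forall_of_exists_update {α : Type*} [Nonempty α] {C : ℕ → (ℕ → α) → Prop}
    (hC : ∀ n f g, (∀ i ≤ n, f i = g i) → C n f → C n g)
    (h : ∀ n f, ∃ x, C n (update f n x)) : ∃ f : ℕ → α, ∀ n, C n f := by
  choose next hnext using h
  let g : ℕ → ℕ → α := fun n =>
    Nat.rec (fun _ => Classical.arbitrary α) (fun k gk => update gk k (next k gk)) n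
  have hg : ∀ m i, i < m → g m i = g (i + 1) i := by
    intro m
    induction m with
    | zero => intro i hi; omega
    | succ m ih =>
      intro i hi
      rcases Nat.lt_succ_iff_lt_or_eq.mp hi with hi | rfl
      · exact (update_of_ne hi.ne _ _).trans (ih i hi)
      · rfl
  exact ⟨fun i => g (i + 1) i, fun n =>
    hC n (g (n + 1)) _ (fun i hi => hg (n + 1) i (by omega)) (hnext n (g n))⟩

theorem exists_tendstoUniformlyOn_of_dist_succ_le {Y Z : Type*} [PseudoMetricSpace Y]
    [CompleteSpace Y] {F : ℕ → Z → Y} {s : Set Z} {C : ℝ}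
    (h : ∀ n, ∀ z ∈ s, dist (F n z) (F (n + 1) z) ≤ C / 2 / 2 ^ n) :
    ∃ G, TendstoUniformlyOn F G atTop s := by
  have hlim : ∀ z, ∃ y, z ∈ s → Tendsto (F · z) atTop (𝓝 y) := fun z => by
    by_cases hz : z ∈ s
    · obtain ⟨y, hy⟩ := cauchySeq_tendsto_of_complete (cauchySeq_of_le_geometric_two (h · z hz))
      exact ⟨y, fun _ => hy⟩
    · exact ⟨F 0 z, fun h => absurd h hz⟩
  choose G hG using hlim
  refine ⟨G, Metric.tendstoUniformlyOn_iff.2 fun δ hδ => ?_⟩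
  have hC : Tendsto (fun n : ℕ => C / 2 ^ n) atTop (𝓝 0) :=
    tendsto_const_nhds.div_atTop (tendsto_pow_atTop_atTop_of_one_lt one_lt_two)
  filter_upwards [hC.eventually_lt_const hδ] with n hn z hz
  rw [dist_comm]
  exact (dist_le_of_le_geometric_two_of_tendsto (h · z hz) (hG z hz) n).trans_lt hn

structure IsPartialSums {Y : Type*} [TopologicalSpace Y] (P : (ℕ → ℝ) → ℕ → Y) : Prop where
  continuous : ∀ n, Continuous fun c => P c n
  congr : ∀ n c c', (∀ i < n, c i = c' i) → P c n = P c' n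
  succ_of_eq_zero : ∀ n c, c n = 0 → P c (n + 1) = P c n

namespace IsPartialSums

variable {Y : Type*} [PseudoMetricSpace Y] {P : (ℕ → ℝ) → ℕ → Y} {T : Set (ℕ → ℝ)}

theorem exists_pos_forall_dist_update_lt (hP : IsPartialSums P) (hT : IsCompact T) (n : ℕ)
    (l : ℕ → ℝ) {ε r : ℝ} (hε : 0 < ε) (hr : 0 < r) :
    ∃ x, 0 < x ∧ x ≤ ε ∧ ∀ t ∈ T, dist (P (t * update l n x) (n + 1)) (P (t * l) n) < r := by
  let f : ℝ → (ℕ → ℝ) → Y := fun x t => P (t * update l n x) (n + 1)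
  have hf : Continuous (uncurry f) :=
    (hP.continuous (n + 1)).comp (continuous_snd.mul (continuous_const.update n continuous_fst))
  have hf0 : ∀ t, f 0 t = P (t * l) n := fun t =>
    (hP.succ_of_eq_zero n _ (by simp)).trans (hP.congr n _ _ fun i hi => by simp [hi.ne])
  obtain ⟨V, hV, hVT⟩ := hT.mem_uniformity_of_prod hf.continuousOn (mem_univ 0)
    (Metric.dist_mem_uniformity hr)
  obtain ⟨δ, hδ, hδV⟩ := Metric.mem_nhds_iff.1 (nhdsWithin_univ (0 : ℝ) ▸ hV)
  have hx : 0 < min ε (δ / 2) := lt_min hε (half_pos hδ)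
  refine ⟨min ε (δ / 2), hx, min_le_left _ _, fun t ht => hf0 t ▸ hVT _ (hδV ?_) t ht⟩
  rw [Metric.mem_ball, Real.dist_0_eq_abs, abs_of_pos hx]
  exact (min_le_right _ _).trans_lt (half_lt_self hδ)

theorem exists_scales_forall_dist_succ_lt (hP : IsPartialSums P) (hT : IsCompact T)
    {ε r : ℕ → ℝ} (hε : ∀ n, 0 < ε n) (hr : ∀ n, 0 < r n) :
    ∃ l : ℕ → ℝ, ∀ n, 0 < l n ∧ l n ≤ ε n ∧
      ∀ t ∈ T, dist (P (t * l) n) (P (t * l) (n + 1)) < r n := by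
  refine exists_forall_of_exists_update (fun n f g hfg ⟨h0, hle, hdist⟩ => ?_) fun n l => ?_
  · have hPfg : ∀ t, ∀ m ≤ n + 1, P (t * f) m = P (t * g) m := fun t m hm =>
      hP.congr m _ _ fun i hi => by simp only [Pi.mul_apply, hfg i (by omega)]
    refine ⟨hfg n le_rfl ▸ h0, hfg n le_rfl ▸ hle, fun t ht => ?_⟩
    rw [← hPfg t n (by omega), ← hPfg t (n + 1) le_rfl]
    exact hdist t ht
  obtain ⟨x, hx0, hxε, hx⟩ := hP.exists_pos_forall_dist_update_lt hT n l (hε n) (hr n)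
  refine ⟨x, by simpa using hx0, by simpa using hxε, fun t ht => ?_⟩
  rw [dist_comm, hP.congr n (t * update l n x) (t * l) fun i hi => by simp [hi.ne]]
  exact hx t ht

theorem exists_scales_tendstoUniformlyOn [CompleteSpace Y] (hP : IsPartialSums P)
    (hT : IsCompact T) {ε : ℕ → ℝ} (hε : ∀ n, 0 < ε n) :
    ∃ l : ℕ → ℝ, (∀ n, 0 < l n ∧ l n ≤ ε n) ∧
      ∃ G, TendstoUniformlyOn (fun n t => P (t * l) n) G atTop T ∧ ContinuousOn G T := by
  obtain ⟨l, hl⟩ := hP.exists_scales_forall_dist_succ_lt hT hε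
    (r := fun n => 2 / 2 / 2 ^ n) fun n => by positivity
  obtain ⟨G, hG⟩ := exists_tendstoUniformlyOn_of_dist_succ_le fun n t ht => ((hl n).2.2 t ht).le
  exact ⟨l, fun n => ⟨(hl n).1, (hl n).2.1⟩, G, hG, hG.continuousOn <| .of_forall fun n =>
    ((hP.continuous n).comp (continuous_id.mul continuous_const)).continuousOn⟩

end IsPartialSums

theorem hasSum_of_continuousWithinAt_indicator {ι M X : Type*} [Zero M] [TopologicalSpace M]
    [AddCommMonoid X] [TopologicalSpace X] {S : Set (ι → M)} {g : (ι → M) → X} {u : ι → X}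
    {t : ι → M} (hg : ContinuousWithinAt g S t) (hS : ∀ s : Finset ι, (s : Set ι).indicator t ∈ S)
    (hu : ∀ s : Finset ι, g ((s : Set ι).indicator t) = ∑ i ∈ s, u i) : HasSum u (g t) := by
  have hind : Tendsto (fun s : Finset ι => (s : Set ι).indicator t) atTop (𝓝[S] t) := by
    refine tendsto_nhdsWithin_iff.2 ⟨tendsto_pi_nhds.2 fun i => tendsto_const_nhds.congr' ?_,
      .of_forall hS⟩
    filter_upwards [eventually_ge_atTop {i}] with s hs
    exact (Set.indicator_of_mem (Finset.singleton_subset_iff.1 hs) t).symm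
  exact (hg.tendsto.comp hind).congr fun s => hu s

section Cube

variable {ι : Type*}

theorem indicator_mem_Icc_zero {s : Set ι} {t a : ι → ℝ} (ht : t ∈ Icc 0 a) :
    s.indicator t ∈ Icc 0 a :=
  ⟨Set.indicator_nonneg fun i _ => ht.1 i, (Set.indicator_le_self' fun i _ => ht.1 i).trans ht.2⟩

theorem add_one_mem_Icc_zero_two {s : ι → ℝ} (hs : s ∈ Icc (-1) 1) : s + 1 ∈ Icc (0 : ι → ℝ) 2 :=
  ⟨by simpa using add_le_add_left hs.1 1,
    by simpa [one_add_one_eq_two] using add_le_add_left hs.2 1⟩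

theorem single_one_mem_Icc_neg_one_one [DecidableEq ι] (i : ι) :
    Pi.single i 1 ∈ Icc (-1 : ι → ℝ) 1 := by
  constructor <;> intro j <;> rcases eq_or_ne j i with rfl | h <;> simp [*]

end Cube

section ClippedSum

variable {X : Type*} [AddCommGroup X] [Module ℝ X] {A : Set X} {x₀ : X} {b : ℕ → X}

theorem Convex.add_sum_smul_mem (hA : Convex ℝ A) (hx₀ : x₀ ∈ A) {ι : Type*} {b : ι → X}
    (hb : ∀ i, x₀ + b i ∈ A) {s : Finset ι} {c : ι → ℝ} (hc₀ : ∀ i ∈ s, 0 ≤ c i)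
    (hc₁ : ∑ i ∈ s, c i ≤ 1) : x₀ + ∑ i ∈ s, c i • b i ∈ A := by
  have := hA.sum_mem (t := s.insertNone) (w := fun o => o.elim (1 - ∑ i ∈ s, c i) c)
    (z := fun o => o.elim x₀ fun i => x₀ + b i) ?_ ?_ ?_
  · convert this using 1
    simp only [Finset.sum_insertNone, Option.elim, smul_add, Finset.sum_add_distrib,
      ← Finset.sum_smul, sub_smul, one_smul]
    abel
  · rw [Finset.forall_mem_insertNone]
    exact ⟨sub_nonneg.2 hc₁, hc₀⟩
  · simp [Finset.sum_insertNone]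
  · rw [Finset.forall_mem_insertNone]
    exact ⟨hx₀, fun i _ => hb i⟩

/-- Clipping makes every `clippedSum` a convex combination of points of `A`, whatever the
coefficients; on the coefficients `tᵢ λᵢ` of the construction it is the identity
(`clippedSum_mul_eq`). -/
noncomputable def clipCoeff (i : ℕ) (x : ℝ) : ℝ := max 0 (min x ((1 / 2) ^ (i + 1)))

noncomputable def clippedSum (x₀ : X) (b : ℕ → X) (c : ℕ → ℝ) (n : ℕ) : X :=
  x₀ + ∑ i ∈ Finset.range n, clipCoeff i (c i) • b i

theorem sum_clipCoeff_le_one (c : ℕ → ℝ) (n : ℕ) :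
    ∑ i ∈ Finset.range n, clipCoeff i (c i) ≤ 1 :=
  calc ∑ i ∈ Finset.range n, clipCoeff i (c i)
      ≤ ∑ i ∈ Finset.range n, (1 / 2 : ℝ) ^ i * (1 / 2) := Finset.sum_le_sum fun i _ => by
        rw [← pow_succ]; exact max_le (by positivity) (min_le_right _ _)
    _ ≤ 2 * (1 / 2) := by rw [← Finset.sum_mul]; gcongr; exact sum_geometric_two_le n
    _ = 1 := by norm_num

theorem Convex.clippedSum_mem (hA : Convex ℝ A) (hx₀ : x₀ ∈ A) (hb : ∀ i, x₀ + b i ∈ A)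
    (c : ℕ → ℝ) (n : ℕ) : clippedSum x₀ b c n ∈ A :=
  hA.add_sum_smul_mem hx₀ hb (fun _ _ => le_max_left _ _) (sum_clipCoeff_le_one c n)

theorem clippedSum_mul_eq {l t : ℕ → ℝ} (hl : ∀ i, 0 < l i ∧ l i ≤ (1 / 2) ^ (i + 2))
    (ht : t ∈ Icc 0 2) (n : ℕ) :
    clippedSum x₀ b (t * l) n = x₀ + ∑ i ∈ Finset.range n, t i • l i • b i := by
  refine congrArg (x₀ + ·) (Finset.sum_congr rfl fun i _ => ?_)
  have hle : t i * l i ≤ (1 / 2) ^ (i + 1) :=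
    calc t i * l i ≤ 2 * (1 / 2) ^ (i + 2) := mul_le_mul (ht.2 i) (hl i).2 (hl i).1.le two_pos.le
      _ = (1 / 2) ^ (i + 1) := by ring
  have hclip : clipCoeff i (t i * l i) = t i * l i := by
    rw [clipCoeff, min_eq_left hle, max_eq_right (mul_nonneg (ht.1 i) (hl i).1.le)]
  rw [Pi.mul_apply, hclip, mul_smul]

theorem isPartialSums_clippedSum [TopologicalSpace X] [IsTopologicalAddGroup X]
    [ContinuousSMul ℝ X] (hA : Convex ℝ A) (hx₀ : x₀ ∈ A) (hb : ∀ i, x₀ + b i ∈ A) :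
    IsPartialSums fun c n => (⟨clippedSum x₀ b c n, hA.clippedSum_mem hx₀ hb c n⟩ : A) where
  continuous n := Continuous.subtype_mk (continuous_const.add <| continuous_finsetSum _ fun i _ =>
    (continuous_const.max ((continuous_apply i).min continuous_const)).smul
      continuous_const) _
  congr n c c' h := Subtype.ext <| congrArg (x₀ + ·) <|
    Finset.sum_congr rfl fun i hi => by rw [h i (Finset.mem_range.1 hi)]
  succ_of_eq_zero n c h := Subtype.ext <| by simp [clippedSum, Finset.sum_range_succ, h, clipCoeff]

end ClippedSum

section Series

variable {X : Type*} [AddCommGroup X] [Module ℝ X] [TopologicalSpace X] {v : ℕ → X}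

theorem mem_image_tsum_smul {S : Set (ℕ → ℝ)} {n : ℕ} (hn : Pi.single n 1 ∈ S) :
    v n ∈ (fun s : ℕ → ℝ => ∑' n, s n • v n) '' S :=
  ⟨_, hn, by simp [Pi.single_apply, ite_smul]⟩

variable [IsTopologicalAddGroup X]

theorem hasSum_smul_of_mem_Icc_neg_one_one
    (hv : ∀ t ∈ Icc (0 : ℕ → ℝ) 2, Summable fun n => t n • v n) {s : ℕ → ℝ}
    (hs : s ∈ Icc (-1) 1) :
    HasSum (fun n => s n • v n) ((∑' n, (s + 1) n • v n) - ∑' n, (1 : ℕ → ℝ) n • v n) := by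
  have h1 : (1 : ℕ → ℝ) ∈ Icc (0 : ℕ → ℝ) 2 := ⟨zero_le_one, one_le_two⟩
  convert (hv _ (add_one_mem_Icc_zero_two hs)).hasSum.sub (hv 1 h1).hasSum using 1
  ext n
  simp [add_smul]

variable [T2Space X]

theorem neg_image_tsum_smul {S : Set (ℕ → ℝ)} (hS : -S = S) :
    -((fun s : ℕ → ℝ => ∑' n, s n • v n) '' S) = (fun s : ℕ → ℝ => ∑' n, s n • v n) '' S := by
  nth_rw 2 [← hS]
  rw [← image_neg_eq_neg, ← image_neg_eq_neg, image_image, image_image]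
  simp [tsum_neg]

variable [ContinuousSMul ℝ X]

theorem convex_image_tsum_smul {S : Set (ℕ → ℝ)} (hS : Convex ℝ S)
    (hv : ∀ s ∈ S, Summable fun n => s n • v n) :
    Convex ℝ ((fun s : ℕ → ℝ => ∑' n, s n • v n) '' S) := by
  rintro _ ⟨s, hs, rfl⟩ _ ⟨s', hs', rfl⟩ a b ha hb hab
  refine ⟨a • s + b • s', hS hs hs' ha hb hab, ?_⟩
  rw [← (((hv s hs).hasSum.const_smul a).add ((hv s' hs').hasSum.const_smul b)).tsum_eq]
  simp [add_smul, smul_smul]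

theorem Convex.exists_pos_scales_summable {A : Set X} (hA : Convex ℝ A)
    [TopologicalSpace.IsCompletelyMetrizableSpace A] {x₀ : X} (hx₀ : x₀ ∈ A) {b : ℕ → X}
    (hb : ∀ n, x₀ + b n ∈ A) :
    ∃ l : ℕ → ℝ, (∀ n, 0 < l n) ∧
      (∀ t ∈ Icc (0 : ℕ → ℝ) 2,
        Summable (fun n => t n • l n • b n) ∧ x₀ + ∑' n, t n • l n • b n ∈ A) ∧
      ContinuousOn (fun t : ℕ → ℝ => ∑' n, t n • l n • b n) (Icc 0 2) := by
  let _ := TopologicalSpace.upgradeIsCompletelyMetrizable A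
  obtain ⟨l, hl, G, hPG, hG⟩ :=
    (isPartialSums_clippedSum hA hx₀ hb).exists_scales_tendstoUniformlyOn isCompact_Icc
      (ε := fun n => (1 / 2) ^ (n + 2)) fun n => by positivity
  -- At a finitely supported `t` the partial sums are eventually constant, so `G t` is a finite
  -- sum; continuity of `G` then gives unconditional summability.
  have hfin : ∀ t ∈ Icc (0 : ℕ → ℝ) 2, ∀ s : Finset ℕ,
      (G ((s : Set ℕ).indicator t) : X) - x₀ = ∑ i ∈ s, t i • l i • b i := by
    intro t ht s
    have hts := indicator_mem_Icc_zero (s := (s : Set ℕ)) ht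
    obtain ⟨N, hN⟩ := s.exists_nat_subset_range
    rw [sub_eq_iff_eq_add']
    refine tendsto_nhds_unique (continuous_subtype_val.continuousAt.tendsto.comp
      (hPG.tendsto_at hts)) (tendsto_const_nhds.congr' ?_)
    filter_upwards [eventually_ge_atTop N] with n hn
    simp only [comp_apply, clippedSum_mul_eq hl hts]
    rw [← Finset.sum_indicator_subset _ (hN.trans (Finset.range_mono hn))]
    refine congrArg (x₀ + ·) (Finset.sum_congr rfl fun i _ => ?_)
    by_cases hi : i ∈ s <;> simp [hi]
  have hsum : ∀ t ∈ Icc (0 : ℕ → ℝ) 2, HasSum (fun n => t n • l n • b n) ((G t : X) - x₀) :=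
    fun t ht => hasSum_of_continuousWithinAt_indicator (g := fun t => (G t : X) - x₀)
      ((continuous_subtype_val.comp_continuousOn hG).sub continuousOn_const t ht)
      (fun _ => indicator_mem_Icc_zero ht) (hfin t ht)
  refine ⟨l, fun n => (hl n).1, fun t ht => ⟨(hsum t ht).summable, ?_⟩, ?_⟩
  · rw [(hsum t ht).tsum_eq, add_sub_cancel]
    exact (G t).2
  · exact ((continuous_subtype_val.comp_continuousOn hG).sub continuousOn_const).congr
      fun t ht => (hsum t ht).tsum_eq

end Series

theorem sub_subset_closure_of_subset_closure {G : Type*} [TopologicalSpace G] [Sub G]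
    [ContinuousSub G] {A D U : Set G} (hA : A ⊆ closure D) (hD : D - D ⊆ U) :
    A - A ⊆ closure U := by
  rintro _ ⟨x, hx, y, hy, rfl⟩
  exact map_mem_closure₂ continuous_sub (hA hx) (hA hy) fun a ha b hb => hD (sub_mem_sub ha hb)

/-- Every nonempty Polish convex subset `A` of a metrizable real topological vector space
contains a translate `c + K` of a compact convex symmetric set `K = -K` such that the
closure of the linear span of `K` contains `A - A`. -/
theorem polish_convex_contains_translate_of_compact_symmetric {X : Type*}
    [AddCommGroup X] [Module ℝ X] [TopologicalSpace X] [IsTopologicalAddGroup X]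
    [ContinuousSMul ℝ X] [TopologicalSpace.MetrizableSpace X]
    {A : Set X} (hA : Convex ℝ A) (hne : A.Nonempty) (hPolish : PolishSpace A) :
    ∃ (c : X) (K : Set X), IsCompact K ∧ Convex ℝ K ∧ -K = K ∧
      (fun x => c + x) '' K ⊆ A ∧ A - A ⊆ closure (Submodule.span ℝ K : Set X) := by
  have : Nonempty A := hne.to_subtype
  obtain ⟨a, ha⟩ := TopologicalSpace.exists_dense_seq A
  set b : ℕ → X := fun n => a n - a 0
  obtain ⟨l, hl, hsum, hcont⟩ := hA.exists_pos_scales_summable (a 0).2 (b := b)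
    fun n => by simp [b]
  set F := fun s : ℕ → ℝ => ∑' n, s n • l n • b n
  have hF : ∀ s ∈ Icc (-1 : ℕ → ℝ) 1, HasSum (fun n => s n • l n • b n) (F (s + 1) - F 1) :=
    fun s => hasSum_smul_of_mem_Icc_neg_one_one fun t ht => (hsum t ht).1
  have hb : ∀ n, b n ∈ Submodule.span ℝ (F '' Icc (-1) 1) := fun n => by
    have := Submodule.smul_mem _ (l n)⁻¹ <| Submodule.subset_span <|
      mem_image_tsum_smul (v := fun n => l n • b n) (single_one_mem_Icc_neg_one_one n)
    rwa [smul_smul, inv_mul_cancel₀ (hl n).ne', one_smul] at this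
  refine ⟨a 0 + F 1, F '' Icc (-1) 1, ?_, convex_image_tsum_smul (convex_Icc _ _)
    fun s hs => (hF s hs).summable, neg_image_tsum_smul (by simp [neg_Icc]), ?_, ?_⟩
  · refine isCompact_Icc.image_of_continuousOn <| ((hcont.comp (continuous_add_const 1).continuousOn
      fun s => add_one_mem_Icc_zero_two).sub continuousOn_const).congr fun s hs => (hF s hs).tsum_eq
  · rintro _ ⟨_, ⟨s, hs, rfl⟩, rfl⟩
    show a 0 + F 1 + F s ∈ A
    rw [show F s = F (s + 1) - F 1 from (hF s hs).tsum_eq, add_add_sub_cancel]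
    exact (hsum _ (add_one_mem_Icc_zero_two hs)).2
  · refine sub_subset_closure_of_subset_closure (Subtype.dense_iff.1 ha) ?_
    rintro _ ⟨_, ⟨_, ⟨m, rfl⟩, rfl⟩, _, ⟨_, ⟨n, rfl⟩, rfl⟩, rfl⟩
    simpa [b] using sub_mem (hb m) (hb n)
end
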